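/- (Dominance-based strengthening rule.) Let (𝒞, 𝒟, g, z, T, ε) be an (F, f)-valid configuration and let C ⊆ ℝ^n. Suppose there exists a witness ω : ℝ^n → ℝ^n such that for all x ∈ ℝ^n: if x ∈ ⋂(𝒞 ∪ 𝒟) and x ∉ C, then ω(x) ∈ ⋂𝒞, ω(x) ≻_{ε,T} x, and g(ω(x)) ≤ g(x). Then (𝒞, 𝒟 ∪ {C}, g, z, T, ε) is also (F, f)-valid. -/

import Mathlib

open Set

/-- Apply a signed index list (index, sign) to a point, giving the vector
`(sign(i₁)·x_{|i₁|}, …, sign(i_k)·x_{|i_k|})` as a list of reals.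
`true` encodes a positive sign, `false` a negative sign. -/
def sigApply {n : ℕ} (σ : List (Fin n × Bool)) (x : Fin n → ℝ) : List ℝ :=
  σ.map (fun p => if p.2 then x p.1 else -(x p.1))

/-- Strict ε-lexicographic order `x ≻_ε y` on lists of reals:
`x ≠ y` and, at the first index where they differ, `x i ≥ y i + ε`. -/
def lexGt (ε : ℝ) : List ℝ → List ℝ → Prop
  | a :: as, b :: bs => (a = b ∧ lexGt ε as bs) ∨ (a ≠ b ∧ b + ε ≤ a)
  | _, _ => False

/-- A branching tree `T = (V, E, B, σ)`: a finite arborescence (encoded by a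
parent map from which every node reaches the root), a branching constraint
`B v ⊆ ℝⁿ` for every node with `B r = ℝⁿ`, and a list `σ v` of signed variable
indices with pairwise distinct absolute values for every node. -/
structure BranchingTree (n : ℕ) where
  V : Type
  fin : Fintype V
  root : V
  parent : V → Option V
  parent_root : parent root = none
  parent_isSome : ∀ v, v ≠ root → (parent v).isSome
  reach_root : ∀ v, Relation.ReflTransGen (fun a b => parent a = some b) v root
  B : V → Set (Fin n → ℝ)
  B_root : B root = Set.univ
  sig : V → List (Fin n × Bool)
  sig_nodup : ∀ v, ((sig v).map Prod.fst).Nodup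

namespace BranchingTree

variable {n : ℕ} (T : BranchingTree n)

/-- The set of children `δ⁺(u)` of a node. -/
def children (u : T.V) : Set T.V := {v | T.parent v = some u}

/-- A leaf is a node without children. -/
def IsLeaf (v : T.V) : Prop := T.children v = ∅

/-- The nodes on the root-to-`v` path (the ancestors of `v`, including `v`). -/
def pathNodes (v : T.V) : Set T.V :=
  {u | Relation.ReflTransGen (fun a b => T.parent a = some b) v u}

/-- `ℬ_v`: the branching constraints attached to the nodes on the root-to-`v` path. -/
def pathCons (v : T.V) : Set (Set (Fin n → ℝ)) := T.B '' T.pathNodes v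

/-- Depth of a node: the number of nodes on its root path. -/
noncomputable def depth (v : T.V) : ℕ := (T.pathNodes v).ncard

/-- The feasible region `⋂(𝒞 ∪ ℬ_v)` of node `v`. -/
def region (𝒞 : Set (Set (Fin n → ℝ))) (v : T.V) : Set (Fin n → ℝ) :=
  ⋂₀ (𝒞 ∪ T.pathCons v)

/-- `T` is `𝒞`-consistent: (T3) the children of any non-leaf cover `⋂𝒞`;
(T5) `σ u` is a prefix of `σ v` for every child `v` of `u`;
(T6) every entry of `σ v (x)` is bounded above over `x ∈ ⋂𝒞`;
(T7) distinct children of `u` have `σ u`-disjoint branching constraints. -/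
def Consistent (𝒞 : Set (Set (Fin n → ℝ))) : Prop :=
  (∀ u : T.V, (T.children u).Nonempty → ⋂₀ 𝒞 ⊆ ⋃ v ∈ T.children u, T.B v) ∧
  (∀ u v : T.V, v ∈ T.children u → T.sig u <+: T.sig v) ∧
  (∀ v : T.V, ∀ i : Fin (T.sig v).length,
    BddAbove ((fun x => if ((T.sig v).get i).2 then x ((T.sig v).get i).1
      else -(x ((T.sig v).get i).1)) '' ⋂₀ 𝒞)) ∧
  (∀ u v w : T.V, v ∈ T.children u → w ∈ T.children u → v ≠ w →
    sigApply (T.sig u) '' T.B v ∩ sigApply (T.sig u) '' T.B w = ∅)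

/-- `v` is a deepest common node `dcn(x,y)`: both `x` and `y` lie in the
feasible region of `v`, and `v` is deepest with this property. -/
def IsDCN (𝒞 : Set (Set (Fin n → ℝ))) (v : T.V) (x y : Fin n → ℝ) : Prop :=
  x ∈ T.region 𝒞 v ∧ y ∈ T.region 𝒞 v ∧
  ∀ w : T.V, x ∈ T.region 𝒞 w → y ∈ T.region 𝒞 w → T.depth w ≤ T.depth v

/-- `x ⪰_T y` : with `v = dcn(x,y)`, `σ v (x) = σ v (y)` or `σ v (x) ≻_ε σ v (y)`. -/
def TreeGe (𝒞 : Set (Set (Fin n → ℝ))) (ε : ℝ) (x y : Fin n → ℝ) : Prop :=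
  ∃ v : T.V, T.IsDCN 𝒞 v x y ∧
    (sigApply (T.sig v) x = sigApply (T.sig v) y ∨
      lexGt ε (sigApply (T.sig v) x) (sigApply (T.sig v) y))

/-- `x ≻_{ε,T} y` : with `v = dcn(x,y)`, `σ v (x) ≻_ε σ v (y)`. -/
def TreeGt (𝒞 : Set (Set (Fin n → ℝ))) (ε : ℝ) (x y : Fin n → ℝ) : Prop :=
  ∃ v : T.V, T.IsDCN 𝒞 v x y ∧
    lexGt ε (sigApply (T.sig v) x) (sigApply (T.sig v) y)

end BranchingTree

/-- A configuration `(𝒞, 𝒟, g, z, T, ε)`. -/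
structure Config (n : ℕ) where
  core : Set (Set (Fin n → ℝ))
  derived : Set (Set (Fin n → ℝ))
  g : (Fin n → ℝ) → ℝ
  z : WithTop ℝ
  tree : BranchingTree n
  eps : ℝ

/-- `(F, f)`-validity of a configuration: (V1) the tree is core-consistent and
`ε > 0`; (V2) if `z < ∞` there is `x ∈ F` with `f x ≤ z`; (V3) for every real
`ẑ < z`, `F` contains a point of `f`-value `≤ ẑ` iff `⋂𝒞` contains a point of
`g`-value `≤ ẑ`; (V4) every `x ∈ ⋂𝒞` with `g x < z` is dominated by some
`y ∈ ⋂(𝒞 ∪ 𝒟)` with `y ⪰_T x` and `g y ≤ g x`. -/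
def Config.Valid {n : ℕ} (F : Set (Fin n → ℝ)) (f : (Fin n → ℝ) → ℝ)
    (K : Config n) : Prop :=
  (K.tree.Consistent K.core ∧ 0 < K.eps) ∧
  (K.z < ⊤ → ∃ x ∈ F, (f x : WithTop ℝ) ≤ K.z) ∧
  (∀ zh : ℝ, (zh : WithTop ℝ) < K.z →
    ((∃ x ∈ F, f x ≤ zh) ↔ ∃ x ∈ ⋂₀ K.core, K.g x ≤ zh)) ∧
  (∀ x ∈ ⋂₀ K.core, (K.g x : WithTop ℝ) < K.z →
    ∃ y ∈ ⋂₀ (K.core ∪ K.derived), K.tree.TreeGe K.core K.eps y x ∧ K.g y ≤ K.g x)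

/-- The implication constraint `[𝒜 ⇝ C] = (ℝⁿ \ ⋂𝒜) ∪ C`. -/
def implCon {n : ℕ} (𝒜 : Set (Set (Fin n → ℝ))) (C : Set (Fin n → ℝ)) :
    Set (Fin n → ℝ) := (⋂₀ 𝒜)ᶜ ∪ C

/-! Every `x ∈ ⋂𝒞` lies on a single branch of `T`: by (T3) it lies in some child of each non-leaf
node of the branch, and by (T7) in only one. Let `ℓ(x)` be the deepest node of that branch. As
the lists `σ_v` grow along branches (T5) and (T7) makes `σ_u` separate the children of `u`,
comparing `x` and `y` at `dcn(x, y)` is the same as comparing `σ_{ℓ(x)}(x)` with `σ_{ℓ(y)}(y)`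
ε-lexicographically. So `⪰_T` and `≻_{ε,T}` are transitive, and since by (T6) these vectors
are bounded above and have length at most `n`, `≻_{ε,T}` admits no infinite ascending chain.
Given `x` as in (V4), take a `≻_{ε,T}`-maximal `y ∈ ⋂(𝒞 ∪ 𝒟)` with `y ⪰_T x` and `g y ≤ g x`.
If `y ∉ C`, then (V4) applied to `ω y ≻_{ε,T} y` gives a strictly larger such point; so `y ∈ C`.
-/

open Relation

section LexGt

variable {ε : ℝ}

lemma lexGt_trans (hε : 0 < ε) :
    ∀ {a b c : List ℝ}, lexGt ε a b → lexGt ε b c → lexGt ε a c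
  | a :: as, b :: bs, c :: cs, hab, hbc => by
      rcases hab with ⟨rfl, hab⟩ | ⟨hab, hba⟩ <;> rcases hbc with ⟨rfl, hbc⟩ | ⟨hbc, hcb⟩
      · exact Or.inl ⟨rfl, lexGt_trans hε hab hbc⟩
      · exact Or.inr ⟨hbc, hcb⟩
      · exact Or.inr ⟨hab, hba⟩
      · exact Or.inr ⟨(by linarith : c < a).ne', by linarith⟩
  | [], _, _, hab, _ | _ :: _, [], _, hab, _ | _ :: _, _ :: _, [], _, hbc => by
      simp [lexGt] at *

lemma lexGt_append_iff : ∀ {p q : List ℝ}, p.length = q.length → p ≠ q →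
    ∀ r s : List ℝ, lexGt ε (p ++ r) (q ++ s) ↔ lexGt ε p q
  | a :: p, b :: q, hlen, hne, r, s => by
      by_cases hab : a = b
      · subst hab
        have hpq : p ≠ q := fun h => hne (h ▸ rfl)
        simp [lexGt, lexGt_append_iff (by simpa using hlen) hpq r s]
      · simp [lexGt, hab]
  | [], [], _, hne, _, _ => (hne rfl).elim
  | [], _ :: _, hlen, _, _, _ | _ :: _, [], hlen, _, _, _ => by simp at hlen

lemma floor_lt_floor_of_add_le (hε : 0 < ε) {M a b : ℝ} (ha : a ≤ M) (hab : b + ε ≤ a) :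
    ⌊(M - a) / ε⌋₊ < ⌊(M - b) / ε⌋₊ := by
  have hstep : (M - a) / ε + 1 ≤ (M - b) / ε := by
    rw [div_add_one hε.ne', div_le_div_iff_of_pos_right hε]
    linarith
  calc ⌊(M - a) / ε⌋₊ < ⌊(M - a) / ε⌋₊ + 1 := Nat.lt_succ_self _
    _ = ⌊(M - a) / ε + 1⌋₊ := (Nat.floor_add_one (div_nonneg (by linarith) hε.le)).symm
    _ ≤ ⌊(M - b) / ε⌋₊ := Nat.floor_le_floor hstep

/- Measuring the head `a ≤ M` by `⌊(M - a) / ε⌋₊` embeds the relation into the lexicographic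
product of `<` on `ℕ` with the relation on tails. -/
theorem wellFounded_lexGt (hε : 0 < ε) (M : ℝ) (L : ℕ) :
    WellFounded fun a b : List ℝ => (a.length ≤ L ∧ ∀ t ∈ a, t ≤ M) ∧ lexGt ε a b := by
  induction L with
  | zero =>
    refine ⟨fun b => Acc.intro b fun a ⟨⟨ha, _⟩, hab⟩ => ?_⟩
    rw [List.length_eq_zero_iff.1 (Nat.le_zero.1 ha)] at hab
    simp [lexGt] at hab
  | succ L ih =>
    refine Subrelation.wf (fun {a b} hab => ?_)
      (InvImage.wf (fun l => (⌊(M - l.headD M) / ε⌋₊, l.tail))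
        (WellFounded.prod_lex wellFounded_lt ih))
    obtain ⟨⟨hlen, hM⟩, hab⟩ := hab
    match a, b, hab with
    | a :: as, b :: bs, Or.inl ⟨hab, htail⟩ =>
      subst hab
      exact Prod.Lex.right _
        ⟨⟨by simpa using hlen, fun t ht => hM t (List.mem_cons_of_mem _ ht)⟩, htail⟩
    | a :: as, b :: bs, Or.inr ⟨_, hab⟩ =>
      exact Prod.Lex.left _ _ (floor_lt_floor_of_add_le hε (hM a List.mem_cons_self) hab)

end LexGt

lemma sigApply_append {n : ℕ} (σ τ : List (Fin n × Bool)) (x : Fin n → ℝ) :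
    sigApply (σ ++ τ) x = sigApply σ x ++ sigApply τ x :=
  List.map_append

lemma length_sigApply_le {n : ℕ} {σ : List (Fin n × Bool)} (hσ : (σ.map Prod.fst).Nodup)
    (x : Fin n → ℝ) : (sigApply σ x).length ≤ n := by
  simpa [sigApply] using hσ.length_le_card

namespace BranchingTree

variable {n : ℕ}

instance (T : BranchingTree n) : Fintype T.V := T.fin

instance (T : BranchingTree n) : Nonempty T.V := ⟨T.root⟩

variable {T : BranchingTree n} {u v w c c' d : T.V}

lemma parent_rightUnique : Relator.RightUnique fun a b : T.V => T.parent a = some b :=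
  fun _ _ _ hb hc => Option.some_injective _ (hb.symm.trans hc)

/- A cycle of the parent map would be inherited by every node reachable from it, the root
included, but the root has no parent. -/
lemma not_transGen_parent_self (v : T.V) : ¬ TransGen (fun a b => T.parent a = some b) v v := by
  intro hv
  have hcycle : ∀ w, ReflTransGen (fun a b => T.parent a = some b) v w →
      TransGen (fun a b => T.parent a = some b) w w := by
    intro w hw
    induction hw with
    | refl => exact hv
    | tail _ hbc ih =>
      obtain ⟨d, hbd, hdb⟩ := TransGen.head'_iff.1 ih
      exact TransGen.tail' (parent_rightUnique hbd hbc ▸ hdb) hbc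
  obtain ⟨_, hroot, -⟩ := TransGen.head'_iff.1 (hcycle _ (T.reach_root v))
  simp [T.parent_root] at hroot

lemma eq_of_mem_pathNodes_of_mem_pathNodes (huv : u ∈ T.pathNodes v) (hvu : v ∈ T.pathNodes u) :
    u = v := by
  rcases reflTransGen_iff_eq_or_transGen.1 huv with h | h
  · exact h
  · exact (not_transGen_parent_self v (h.trans_left hvu)).elim

lemma pathNodes_subset (h : u ∈ T.pathNodes v) : T.pathNodes u ⊆ T.pathNodes v :=
  fun _ hw => ReflTransGen.trans h hw

lemma pathNodes_subset_insert (hc : c ∈ T.children u) :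
    T.pathNodes c ⊆ insert c (T.pathNodes u) := by
  intro w hw
  rcases ReflTransGen.cases_head hw with rfl | ⟨b, hcb, hbw⟩
  · exact Set.mem_insert _ _
  · exact Set.mem_insert_of_mem _ (parent_rightUnique hc hcb ▸ hbw)

lemma depth_lt_depth (h : u ∈ T.pathNodes v) (hne : u ≠ v) : T.depth u < T.depth v :=
  Set.ncard_lt_ncard ⟨pathNodes_subset h, fun hvu =>
    hne (eq_of_mem_pathNodes_of_mem_pathNodes h (hvu ReflTransGen.refl))⟩ (Set.toFinite _)

lemma depth_lt_depth_of_mem_children (hc : c ∈ T.children u) : T.depth u < T.depth c :=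
  depth_lt_depth (ReflTransGen.single hc) fun h => by
    subst h
    exact not_transGen_parent_self u (.single hc)

lemma exists_mem_children_mem_pathNodes (h : u ∈ T.pathNodes w) (hne : u ≠ w) :
    ∃ c ∈ T.children u, c ∈ T.pathNodes w := by
  induction h using ReflTransGen.head_induction_on with
  | refl => exact absurd rfl hne
  | @head w b hwb hbu ih =>
    by_cases hub : u = b
    · exact ⟨w, hub ▸ hwb, ReflTransGen.refl⟩
    · obtain ⟨c, hc, hcb⟩ := ih hub
      exact ⟨c, hc, ReflTransGen.head hwb hcb⟩

variable {𝒞 : Set (Set (Fin n → ℝ))} {ε : ℝ} {x y z : Fin n → ℝ}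

lemma mem_region_iff : x ∈ T.region 𝒞 v ↔ x ∈ ⋂₀ 𝒞 ∧ ∀ u ∈ T.pathNodes v, x ∈ T.B u := by
  simp [region, pathCons, Set.sInter_union]


lemma region_subset_sInter : T.region 𝒞 v ⊆ ⋂₀ 𝒞 := fun _ hx => (mem_region_iff.1 hx).1

lemma mem_B_of_mem_region (h : u ∈ T.pathNodes v) (hx : x ∈ T.region 𝒞 v) : x ∈ T.B u :=
  (mem_region_iff.1 hx).2 u h

lemma mem_region_root (hx : x ∈ ⋂₀ 𝒞) : x ∈ T.region 𝒞 T.root := by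
  refine mem_region_iff.2 ⟨hx, fun u hu => ?_⟩
  rcases ReflTransGen.cases_head hu with rfl | ⟨_, hroot, -⟩
  · simp [T.B_root]
  · simp [T.parent_root] at hroot

lemma mem_region_of_mem_children (hc : c ∈ T.children u) (hx : x ∈ T.region 𝒞 u)
    (hxc : x ∈ T.B c) : x ∈ T.region 𝒞 c := by
  refine mem_region_iff.2 ⟨region_subset_sInter hx, fun w hw => ?_⟩
  rcases pathNodes_subset_insert hc hw with rfl | hw
  · exact hxc
  · exact mem_B_of_mem_region hw hx

lemma sig_prefix (hT : T.Consistent 𝒞) (h : u ∈ T.pathNodes v) : T.sig u <+: T.sig v := by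
  induction h with
  | refl => exact List.prefix_refl _
  | tail _ hbc ih => exact (hT.2.1 _ _ hbc).trans ih

lemma eq_of_sigApply_eq (hT : T.Consistent 𝒞) (hc : c ∈ T.children u) (hc' : c' ∈ T.children u)
    (hx : x ∈ T.B c) (hy : y ∈ T.B c') (hxy : sigApply (T.sig u) x = sigApply (T.sig u) y) :
    c = c' := by
  by_contra hne
  exact (Set.eq_empty_iff_forall_notMem.1 (hT.2.2.2 u c c' hc hc' hne)) _
    ⟨⟨x, hx, rfl⟩, ⟨y, hy, hxy.symm⟩⟩

/- Below a deepest common ancestor `a` of `v` and `w`, the branches towards `v` and `w` would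
pass through distinct children of `a` both containing `x`, against (T7). -/
lemma mem_pathNodes_or_mem_pathNodes (hT : T.Consistent 𝒞) (hv : x ∈ T.region 𝒞 v)
    (hw : x ∈ T.region 𝒞 w) : v ∈ T.pathNodes w ∨ w ∈ T.pathNodes v := by
  obtain ⟨a, ⟨hav, haw⟩, hmax⟩ := (Set.toFinite (T.pathNodes v ∩ T.pathNodes w)).exists_maximalFor
    T.depth _ ⟨T.root, T.reach_root v, T.reach_root w⟩
  by_contra! h
  obtain ⟨c, hc, hcv⟩ := exists_mem_children_mem_pathNodes hav fun hav' => h.1 (hav' ▸ haw)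
  obtain ⟨c', hc', hcw⟩ := exists_mem_children_mem_pathNodes haw fun haw' => h.2 (haw' ▸ hav)
  obtain rfl : c = c' := eq_of_sigApply_eq hT hc hc' (mem_B_of_mem_region hcv hv)
    (mem_B_of_mem_region hcw hw) rfl
  have hlt := depth_lt_depth_of_mem_children hc
  exact hlt.not_ge (hmax ⟨hcv, hcw⟩ hlt.le)

lemma exists_isDCN (hx : x ∈ ⋂₀ 𝒞) (hy : y ∈ ⋂₀ 𝒞) : ∃ v, T.IsDCN 𝒞 v x y := by
  obtain ⟨v, ⟨hxv, hyv⟩, hmax⟩ :=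
    (Set.toFinite {v | x ∈ T.region 𝒞 v ∧ y ∈ T.region 𝒞 v}).exists_maximalFor T.depth _
      ⟨T.root, mem_region_root hx, mem_region_root hy⟩
  exact ⟨v, hxv, hyv, fun w hxw hyw => (le_total _ _).elim id (hmax ⟨hxw, hyw⟩)⟩

lemma IsDCN.symm (h : T.IsDCN 𝒞 v x y) : T.IsDCN 𝒞 v y x :=
  ⟨h.2.1, h.1, fun w hy hx => h.2.2 w hx hy⟩

lemma mem_pathNodes_of_isDCN (hT : T.Consistent 𝒞) (hd : T.IsDCN 𝒞 d x y)
    (hx : x ∈ T.region 𝒞 v) (hy : y ∈ T.region 𝒞 v) : v ∈ T.pathNodes d := by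
  rcases mem_pathNodes_or_mem_pathNodes hT hx hd.1 with h | h
  · exact h
  · obtain rfl : d = v := by_contra fun hne => (depth_lt_depth h hne).not_ge (hd.2.2 v hx hy)
    exact ReflTransGen.refl

/- By (T3) `y` lies in some child `c'` of `v`; `c' = c` would be a deeper common node. -/
lemma sigApply_ne_of_isDCN (hT : T.Consistent 𝒞) (hv : T.IsDCN 𝒞 v x y)
    (hc : c ∈ T.children v) (hxc : x ∈ T.B c) :
    sigApply (T.sig v) x ≠ sigApply (T.sig v) y := by
  intro hxy
  obtain ⟨c', hc', hyc'⟩ := Set.mem_iUnion₂.1 (hT.1 v ⟨c, hc⟩ (region_subset_sInter hv.2.1))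
  obtain rfl := eq_of_sigApply_eq hT hc hc' hxc hyc' hxy
  exact (depth_lt_depth_of_mem_children hc).not_ge
    (hv.2.2 c (mem_region_of_mem_children hc hv.1 hxc) (mem_region_of_mem_children hc hv.2.1 hyc'))

/-- `ℓ(x)`, the deepest node whose region contains `x` (meaningful for `x ∈ ⋂𝒞`). -/
noncomputable def deepestNode (T : BranchingTree n) (𝒞 : Set (Set (Fin n → ℝ)))
    (x : Fin n → ℝ) : T.V :=
  Classical.epsilon fun v => T.IsDCN 𝒞 v x x

noncomputable def deepestSig (T : BranchingTree n) (𝒞 : Set (Set (Fin n → ℝ)))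
    (x : Fin n → ℝ) : List ℝ :=
  sigApply (T.sig (T.deepestNode 𝒞 x)) x

lemma isDCN_deepestNode (hx : x ∈ ⋂₀ 𝒞) : T.IsDCN 𝒞 (T.deepestNode 𝒞 x) x x :=
  Classical.epsilon_spec (exists_isDCN hx hx)

lemma mem_pathNodes_deepestNode (hT : T.Consistent 𝒞) (hx : x ∈ T.region 𝒞 v) :
    v ∈ T.pathNodes (T.deepestNode 𝒞 x) :=
  mem_pathNodes_of_isDCN hT (isDCN_deepestNode (region_subset_sInter hx)) hx hx

lemma exists_deepestSig_eq_append (hT : T.Consistent 𝒞) (hx : x ∈ T.region 𝒞 v) :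
    ∃ r, T.deepestSig 𝒞 x = sigApply (T.sig v) x ++ r := by
  obtain ⟨τ, hτ⟩ := sig_prefix hT (mem_pathNodes_deepestNode hT hx)
  exact ⟨sigApply τ x, by rw [deepestSig, ← hτ, sigApply_append]⟩

lemma deepestNode_eq_of_sigApply_eq (hT : T.Consistent 𝒞) (hv : T.IsDCN 𝒞 v x y)
    (hxy : sigApply (T.sig v) x = sigApply (T.sig v) y) : T.deepestNode 𝒞 x = v := by
  by_contra hne
  have hd := isDCN_deepestNode (T := T) (region_subset_sInter hv.1)
  obtain ⟨c, hc, hcd⟩ :=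
    exists_mem_children_mem_pathNodes (mem_pathNodes_deepestNode hT hv.1) (Ne.symm hne)
  exact sigApply_ne_of_isDCN hT hv hc (mem_B_of_mem_region hcd hd.1) hxy

lemma deepestSig_iff_sigApply (hT : T.Consistent 𝒞) (hv : T.IsDCN 𝒞 v x y) :
    (T.deepestSig 𝒞 x = T.deepestSig 𝒞 y ↔ sigApply (T.sig v) x = sigApply (T.sig v) y) ∧
      (lexGt ε (T.deepestSig 𝒞 x) (T.deepestSig 𝒞 y) ↔
        lexGt ε (sigApply (T.sig v) x) (sigApply (T.sig v) y)) := by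
  by_cases hxy : sigApply (T.sig v) x = sigApply (T.sig v) y
  · rw [deepestSig, deepestSig, deepestNode_eq_of_sigApply_eq hT hv hxy,
      deepestNode_eq_of_sigApply_eq hT hv.symm hxy.symm]
    exact ⟨Iff.rfl, Iff.rfl⟩
  · obtain ⟨r, hr⟩ := exists_deepestSig_eq_append hT hv.1
    obtain ⟨s, hs⟩ := exists_deepestSig_eq_append hT hv.2.1
    have hlen : (sigApply (T.sig v) x).length = (sigApply (T.sig v) y).length := by
      simp [sigApply]
    rw [hr, hs, lexGt_append_iff hlen hxy]
    exact ⟨iff_of_false (fun h => hxy (List.append_inj h hlen).1) hxy, Iff.rfl⟩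

lemma TreeGe.mem_sInter (h : T.TreeGe 𝒞 ε x y) : x ∈ ⋂₀ 𝒞 ∧ y ∈ ⋂₀ 𝒞 :=
  let ⟨_, hv, _⟩ := h; ⟨region_subset_sInter hv.1, region_subset_sInter hv.2.1⟩

lemma TreeGt.treeGe (h : T.TreeGt 𝒞 ε x y) : T.TreeGe 𝒞 ε x y :=
  let ⟨v, hv, hxy⟩ := h; ⟨v, hv, Or.inr hxy⟩

lemma treeGe_iff_deepestSig (hT : T.Consistent 𝒞) (hx : x ∈ ⋂₀ 𝒞) (hy : y ∈ ⋂₀ 𝒞) :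
    T.TreeGe 𝒞 ε x y ↔ T.deepestSig 𝒞 x = T.deepestSig 𝒞 y ∨
      lexGt ε (T.deepestSig 𝒞 x) (T.deepestSig 𝒞 y) := by
  constructor
  · rintro ⟨v, hv, hxy⟩
    have hiff := deepestSig_iff_sigApply (ε := ε) hT hv
    rwa [hiff.1, hiff.2]
  · intro hxy
    obtain ⟨v, hv⟩ := exists_isDCN (T := T) hx hy
    have hiff := deepestSig_iff_sigApply (ε := ε) hT hv
    rw [hiff.1, hiff.2] at hxy
    exact ⟨v, hv, hxy⟩

lemma treeGt_iff_deepestSig (hT : T.Consistent 𝒞) (hx : x ∈ ⋂₀ 𝒞) (hy : y ∈ ⋂₀ 𝒞) :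
    T.TreeGt 𝒞 ε x y ↔ lexGt ε (T.deepestSig 𝒞 x) (T.deepestSig 𝒞 y) := by
  constructor
  · rintro ⟨v, hv, hxy⟩
    exact (deepestSig_iff_sigApply hT hv).2.2 hxy
  · intro hxy
    obtain ⟨v, hv⟩ := exists_isDCN (T := T) hx hy
    exact ⟨v, hv, (deepestSig_iff_sigApply hT hv).2.1 hxy⟩

lemma TreeGe.trans (hT : T.Consistent 𝒞) (hε : 0 < ε) (hzy : T.TreeGe 𝒞 ε z y)
    (hyx : T.TreeGe 𝒞 ε y x) : T.TreeGe 𝒞 ε z x := by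
  obtain ⟨hz, hy⟩ := hzy.mem_sInter
  obtain ⟨-, hx⟩ := hyx.mem_sInter
  rw [treeGe_iff_deepestSig hT hz hy] at hzy
  rw [treeGe_iff_deepestSig hT hy hx] at hyx
  rw [treeGe_iff_deepestSig hT hz hx]
  rcases hzy with h1 | h1 <;> rcases hyx with h2 | h2
  · exact Or.inl (h1.trans h2)
  · exact Or.inr (h1 ▸ h2)
  · exact Or.inr (h2 ▸ h1)
  · exact Or.inr (lexGt_trans hε h1 h2)

lemma TreeGe.trans_treeGt (hT : T.Consistent 𝒞) (hε : 0 < ε) (hzy : T.TreeGe 𝒞 ε z y)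
    (hyx : T.TreeGt 𝒞 ε y x) : T.TreeGt 𝒞 ε z x := by
  obtain ⟨hz, hy⟩ := hzy.mem_sInter
  obtain ⟨-, hx⟩ := hyx.treeGe.mem_sInter
  rw [treeGe_iff_deepestSig hT hz hy] at hzy
  rw [treeGt_iff_deepestSig hT hy hx] at hyx
  rw [treeGt_iff_deepestSig hT hz hx]
  rcases hzy with h1 | h1
  · exact h1 ▸ hyx
  · exact lexGt_trans hε h1 hyx

lemma exists_forall_mem_sigApply_le (hT : T.Consistent 𝒞) :
    ∃ M, ∀ v, ∀ x ∈ ⋂₀ 𝒞, ∀ t ∈ sigApply (T.sig v) x, t ≤ M := by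
  choose b hb using fun v i => hT.2.2.1 v i
  obtain ⟨M, hM⟩ := Finite.bddAbove_range fun p : Σ v, Fin (T.sig v).length => b p.1 p.2
  refine ⟨M, fun v x hx t ht => ?_⟩
  obtain ⟨p, hp, rfl⟩ := List.mem_map.1 ht
  obtain ⟨i, rfl⟩ := List.mem_iff_get.1 hp
  exact (hb v i ⟨x, hx, rfl⟩).trans (hM ⟨⟨v, i⟩, rfl⟩)

theorem wellFounded_treeGt (hT : T.Consistent 𝒞) (hε : 0 < ε) :
    WellFounded (T.TreeGt 𝒞 ε) := by
  obtain ⟨M, hM⟩ := exists_forall_mem_sigApply_le hT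
  refine Subrelation.wf (fun {x y} hxy => ?_)
    (InvImage.wf (T.deepestSig 𝒞) (wellFounded_lexGt hε M n))
  obtain ⟨hx, hy⟩ := hxy.treeGe.mem_sInter
  exact ⟨⟨length_sigApply_le (T.sig_nodup _) x, hM _ x hx⟩,
    (treeGt_iff_deepestSig hT hx hy).1 hxy⟩

end BranchingTree

/-- dominance-based strengthening rule: if
`(𝒞, 𝒟, g, z, T, ε)` is `(F, f)`-valid and there is a witness `ω : ℝⁿ → ℝⁿ`
such that every `x ∈ ⋂(𝒞 ∪ 𝒟)` with `x ∉ C` satisfies `ω x ∈ ⋂𝒞`,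
`ω x ≻_{ε,T} x`, and `g (ω x) ≤ g x`, then `(𝒞, 𝒟 ∪ {C}, g, z, T, ε)` is also
`(F, f)`-valid. -/
theorem dominance_strengthening {n : ℕ} (F : Set (Fin n → ℝ))
    (f : (Fin n → ℝ) → ℝ) (K : Config n) (hV : K.Valid F f)
    (C : Set (Fin n → ℝ)) (ω : (Fin n → ℝ) → (Fin n → ℝ))
    (hω : ∀ x : Fin n → ℝ, x ∈ ⋂₀ (K.core ∪ K.derived) → x ∉ C →
      ω x ∈ ⋂₀ K.core ∧
      K.tree.TreeGt K.core K.eps (ω x) x ∧ K.g (ω x) ≤ K.g x) :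
    Config.Valid F f
      { core := K.core, derived := insert C K.derived, g := K.g, z := K.z,
        tree := K.tree, eps := K.eps } := by
  obtain ⟨⟨hT, hε⟩, hz, hopt, hdom⟩ := hV
  refine ⟨⟨hT, hε⟩, hz, hopt, fun x hx hgx => ?_⟩
  obtain ⟨y, ⟨hy, hyx, hgy⟩, hmax⟩ := (BranchingTree.wellFounded_treeGt hT hε).has_min
    {y | y ∈ ⋂₀ (K.core ∪ K.derived) ∧ K.tree.TreeGe K.core K.eps y x ∧ K.g y ≤ K.g x}
    (hdom x hx hgx)
  by_cases hyC : y ∈ C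
  · refine ⟨y, ?_, hyx, hgy⟩
    rw [Set.union_insert, Set.sInter_insert]
    exact ⟨hyC, hy⟩
  · obtain ⟨hωy, hωyy, hgωy⟩ := hω y hy hyC
    obtain ⟨y', hy', hy'ωy, hgy'⟩ :=
      hdom (ω y) hωy ((WithTop.coe_le_coe.2 (hgωy.trans hgy)).trans_lt hgx)
    have hy'y := hy'ωy.trans_treeGt hT hε hωyy
    exact (hmax y' ⟨hy', hy'y.treeGe.trans hT hε hyx, hgy'.trans (hgωy.trans hgy)⟩ hy'y).elim
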